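/- Solution of the Blissard problem: given a sequence a = (1, a₁, a₂, ...) with a₀ = 1, the unique sequence b = (b₀, b₁, b₂, ...) with b₀ = 1 such that the Cauchy product of the exponential generating functions ∑ a_k t^k/k! and ∑ b_k t^k/k! is identically 1 is given by b_n = Y_n(-1!, a₁; 2!, a₂; -3!, a₃; ...; (-1)^n n!, a_n) = ∑_{k=1}^n (-1)^k k! B_{n,k}(a₁,...,a_{n-k+1}) for n ≥ 1. -/

import Mathlib

/-!
Write `E = ∑ aₙ tⁿ/n!`. Differentiating shows `(E - a₀)ᵏ = ∑ₙ k! B_{n,k}(a) tⁿ/n!`: the defining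
recursion of `B_{n,k}` is the coefficient form of `(uᵏ⁺¹)' = (k+1) u' uᵏ`. As `a₀ = 1`, the
truncated geometric series `∑_{k ≤ n} (1 - E)ᵏ` inverts `E` modulo `tⁿ⁺¹`, because `t ∣ 1 - E`;
for `m ≤ n` its coefficient of `tᵐ` is `∑ₖ (-1)ᵏ k! B_{m,k}(a) / m!`. The hypothesis says that the
exponential generating function of `b` is also an inverse of `E`, so the two agree.
-/

/-- Partial (exponential) Bell polynomials `B_{n,k}(g₁, g₂, …)`, defined by the recursion
`B_{n,k} = ∑_{h=0}^{n-k} C(n-1,h) B_{n-h-1,k-1} g_{h+1}`, with `B_{0,0} = 1` and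
`B_{n,0} = 0` for `n ≥ 1` (and `B_{0,k} = 0` for `k ≥ 1`). -/
def bellB : ℕ → ℕ → (ℕ → ℝ) → ℝ
  | 0, 0, _ => 1
  | _+1, 0, _ => 0
  | 0, _+1, _ => 0
  | n+1, k+1, g => ∑ h ∈ Finset.range (n + 1 - k), (n.choose h : ℝ) * bellB (n - h) k g * g (h + 1)
  termination_by n _ _ => n
  decreasing_by omega


/-- The complete Bell polynomial `Y_n(f₁,g₁;…;f_n,g_n) = ∑_{k=1}^n B_{n,k}(g₁,…) f_k`. -/
def bellY (n : ℕ) (f g : ℕ → ℝ) : ℝ := ∑ k ∈ Finset.Icc 1 n, bellB n k g * f k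

open PowerSeries Finset Nat

lemma bellB_zero_zero (g : ℕ → ℝ) : bellB 0 0 g = 1 := by rw [bellB]

lemma bellB_succ_zero (n : ℕ) (g : ℕ → ℝ) : bellB (n + 1) 0 g = 0 := by rw [bellB]

lemma bellB_eq_zero_of_lt (g : ℕ → ℝ) {n k : ℕ} (h : n < k) : bellB n k g = 0 := by
  induction n using Nat.strong_induction_on generalizing k with
  | _ n ih =>
    match n, k with
    | 0, k + 1 => rw [bellB]
    | n + 1, k + 1 =>
      rw [bellB]
      refine sum_eq_zero fun i hi => ?_
      rw [ih (n - i) (by omega) (by grind), mul_zero, zero_mul]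

lemma bellB_succ_succ (n k : ℕ) (g : ℕ → ℝ) :
    bellB (n + 1) (k + 1) g =
      ∑ h ∈ range (n + 1), (n.choose h : ℝ) * bellB (n - h) k g * g (h + 1) := by
  rw [bellB]
  refine sum_subset (fun h => by simp only [mem_range]; omega) fun h hn hk => ?_
  rw [bellB_eq_zero_of_lt g (by grind), mul_zero, zero_mul]

noncomputable def egf (f : ℕ → ℝ) : ℝ⟦X⟧ := mk fun n => f n / n !

lemma coeff_egf (f : ℕ → ℝ) (n : ℕ) : coeff n (egf f) = f n / n ! := coeff_mk _ _

lemma egf_injective : Function.Injective egf := fun f g h => funext fun n => by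
  simpa [coeff_egf, div_left_inj' (cast_ne_zero.2 n.factorial_ne_zero : (n ! : ℝ) ≠ 0)] using
    congrArg (coeff n) h

lemma coeff_egf_mul (f g : ℕ → ℝ) (n : ℕ) :
    coeff n (egf f * egf g) =
      (∑ k ∈ range (n + 1), (n.choose k : ℝ) * f k * g (n - k)) / n ! := by
  rw [coeff_mul, Nat.sum_antidiagonal_eq_sum_range_succ_mk, sum_div]
  refine sum_congr rfl fun k hk => ?_
  rw [coeff_egf, coeff_egf, cast_choose ℝ (by grind)]
  field_simp

lemma egf_mul_egf_eq_one {f g : ℕ → ℝ} (h0 : f 0 * g 0 = 1)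
    (h : ∀ n, 1 ≤ n → ∑ k ∈ range (n + 1), (n.choose k : ℝ) * f k * g (n - k) = 0) :
    egf f * egf g = 1 := by
  ext n
  rw [coeff_egf_mul, coeff_one]
  rcases n with _ | n
  · simp [h0]
  · simp [h (n + 1) (by omega)]

lemma derivative_egf (f : ℕ → ℝ) : d⁄dX ℝ (egf f) = egf fun n => f (n + 1) := by
  ext n
  rw [coeff_derivative, coeff_egf, coeff_egf, factorial_succ]
  push_cast
  field_simp

lemma egf_sub_C_pow (g : ℕ → ℝ) (k : ℕ) :
    (egf g - C (g 0)) ^ k = egf fun n => k ! * bellB n k g := by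
  induction k with
  | zero =>
    ext n
    rcases n with _ | n <;> simp [coeff_egf, coeff_one, bellB_zero_zero, bellB_succ_zero]
  | succ k ih =>
    refine derivative.ext ?_ ?_
    · rw [Derivation.leibniz_pow, add_tsub_cancel_right, ih, map_sub, derivative_C, sub_zero,
        derivative_egf, derivative_egf, smul_eq_mul, mul_comm]
      ext n
      rw [map_nsmul, nsmul_eq_mul, coeff_egf_mul, coeff_egf, bellB_succ_succ, mul_sum,
        ← mul_div_assoc, mul_sum]
      congr 1
      refine sum_congr rfl fun h _ => ?_
      push_cast [factorial_succ]
      ring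
    · rw [map_pow, map_sub, constantCoeff_C, ← coeff_zero_eq_constantCoeff_apply,
        ← coeff_zero_eq_constantCoeff_apply, coeff_egf, coeff_egf]
      simp [bellB]

noncomputable def blissardSeq (a : ℕ → ℝ) (n : ℕ) : ℝ :=
  ∑ k ∈ range (n + 1), (-1 : ℝ) ^ k * k ! * bellB n k a

lemma blissardSeq_eq_sum_Icc (a : ℕ → ℝ) {n : ℕ} (hn : 1 ≤ n) :
    blissardSeq a n = ∑ k ∈ Icc 1 n, (-1 : ℝ) ^ k * k ! * bellB n k a := by
  obtain ⟨m, rfl⟩ : ∃ m, n = m + 1 := ⟨n - 1, by omega⟩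
  rw [blissardSeq, range_eq_Ico, sum_eq_sum_Ico_succ_bot (by omega), bellB_succ_zero, mul_zero,
    zero_add]
  rfl

lemma coeff_geom_sum_one_sub_egf {a : ℕ → ℝ} (ha0 : a 0 = 1) {n j : ℕ} (hj : j ≤ n) :
    coeff j (∑ k ∈ range (n + 1), (1 - egf a) ^ k) = blissardSeq a j / j ! := by
  have hneg : 1 - egf a = (-1 : ℝ) • (egf a - C (a 0)) := by
    rw [ha0, map_one, neg_smul, one_smul, neg_sub]
  simp only [hneg, smul_pow, egf_sub_C_pow, map_sum, map_smul, coeff_egf, smul_eq_mul,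
    blissardSeq, sum_div, mul_div_assoc, mul_assoc]
  refine (sum_subset (fun k => by simp only [mem_range]; omega) fun k _ hk => ?_).symm
  rw [bellB_eq_zero_of_lt a (by grind)]
  simp

lemma egf_mul_egf_blissardSeq {a : ℕ → ℝ} (ha0 : a 0 = 1) :
    egf a * egf (blissardSeq a) = 1 := by
  ext n
  set G := ∑ k ∈ range (n + 1), (1 - egf a) ^ k
  have hX : X ∣ 1 - egf a := X_dvd_iff.2 (by
    rw [map_sub, map_one, ← coeff_zero_eq_constantCoeff_apply, coeff_egf, ha0]; simp)
  have hG : X ^ (n + 1) ∣ egf (blissardSeq a) - G := X_pow_dvd_iff.2 fun m hm => by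
    rw [map_sub, coeff_egf, coeff_geom_sum_one_sub_egf ha0 (by omega), sub_self]
  have hsplit : egf a * egf (blissardSeq a) - 1
      = egf a * (egf (blissardSeq a) - G) - (1 - egf a) ^ (n + 1) := by
    linear_combination mul_neg_geom_sum (1 - egf a) (n + 1)
  have hdvd : X ^ (n + 1) ∣ egf a * egf (blissardSeq a) - 1 := by
    rw [hsplit]
    exact dvd_sub (dvd_mul_of_dvd_right hG _) (pow_dvd_pow_of_dvd hX _)
  exact sub_eq_zero.1 (by simpa using X_pow_dvd_iff.1 hdvd n n.lt_succ_self)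

/-- Solution of the Blissard problem: the unique sequence `b` with `b₀ = 1` whose
exponential generating function is the reciprocal of that of `a` is given by
`b_n = Y_n(-1!, a₁; 2!, a₂; …; (-1)^n n!, a_n)`. -/
theorem blissard_solution (a b : ℕ → ℝ) (ha0 : a 0 = 1) (hb0 : b 0 = 1)
    (hab : ∀ n : ℕ, 1 ≤ n → ∑ k ∈ Finset.range (n + 1), (n.choose k : ℝ) * a k * b (n - k) = 0) :
    ∀ n : ℕ, 1 ≤ n →
      b n = bellY n (fun k => (-1 : ℝ) ^ k * k.factorial) a ∧
      b n = ∑ k ∈ Finset.Icc 1 n, (-1 : ℝ) ^ k * k.factorial * bellB n k a := by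
  have ha : egf a ≠ 0 := fun h => by simpa [coeff_egf, ha0] using congrArg (coeff 0) h
  have hb : b = blissardSeq a := egf_injective <| mul_left_cancel₀ ha <|
    (egf_mul_egf_eq_one (by rw [ha0, hb0, one_mul]) hab).trans (egf_mul_egf_blissardSeq ha0).symm
  intro n hn
  have hbn := hb ▸ blissardSeq_eq_sum_Icc a hn
  exact ⟨hbn.trans (sum_congr rfl fun k _ => mul_comm _ _), hbn⟩
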